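/- arXiv:2602.05020 — 6 statements merged into one kernel-verified Lean document; each statement's English description precedes it below -/
import Mathlib

section
/- Let i* ∈ Fin s and let x0 ∈ X satisfy x0 i* ≠ 0 and x0 i = 0 for all i ≠ i*. Assume there exist constants C, σ > 0 and an admissible pair (x, u) from x0 such that ‖x(t)‖ ≤ C·e^{−σt}·‖x0‖ and ‖u(t)‖ ≤ C·e^{−σt}·‖x0‖ for all t ≥ 0. Let (x*, u*) be an optimal admissible pair from x0. Then (∫₀^∞ ‖x*(t)‖² dt)^{1/2} ≤ C·√((M_Q + M_R)/(2σμ)) · ‖x0 i*‖. -/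
open scoped RealInnerProductSpace ENNReal
open MeasureTheory Set

/-!
Coercivity of `Q` and positivity of `R` give `μ ‖x*‖²_{L²} ≤ J(x*, u*)`, and optimality bounds
`J(x*, u*)` by the cost of the exponentially decaying pair, whose integrand is at most
`(M_Q + M_R) C² e^{-2σt} ‖x0‖²`; this integrates to `(M_Q + M_R) C² ‖x0‖² / (2σ)`. Finally
`‖x0‖ = ‖x0 i*‖` because `x0` is supported on the single node `i*`.
-/

lemma PiLp.norm_eq_norm_apply_of_forall_ne {p : ℝ≥0∞} [Fact (1 ≤ p)] {ι : Type*} [Fintype ι]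
    {β : ι → Type*} [∀ i, SeminormedAddCommGroup (β i)] {x : PiLp p β} {j : ι}
    (hx : ∀ i, i ≠ j → x i = 0) : ‖x‖ = ‖x j‖ := by
  classical
  have hsingle : x = PiLp.single p j (x j) := by
    ext i
    by_cases hij : i = j
    · subst hij; rw [PiLp.single_eq_same p]
    · rw [PiLp.single_eq_of_ne p hij, hx i hij]
  conv_lhs => rw [hsingle]
  exact PiLp.norm_single p β j (x j)

lemma real_inner_map_self_le_of_norm_map_le {E : Type*} [NormedAddCommGroup E]
    [InnerProductSpace ℝ E] {T : E → E} {M : ℝ} (hT : ∀ x, ‖T x‖ ≤ M * ‖x‖) (x : E) :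
    ⟪x, T x⟫ ≤ M * ‖x‖ ^ 2 :=
  calc ⟪x, T x⟫ ≤ ‖x‖ * ‖T x‖ := real_inner_le_norm _ _
    _ ≤ ‖x‖ * (M * ‖x‖) := mul_le_mul_of_nonneg_left (hT x) (norm_nonneg _)
    _ = M * ‖x‖ ^ 2 := by ring

lemma lintegral_ofReal_mul_exp_neg_mul_Ioi {K a : ℝ} (hK : 0 ≤ K) (ha : 0 < a) :
    ∫⁻ t in Ioi (0 : ℝ), ENNReal.ofReal (K * Real.exp (-a * t)) =
      ENNReal.ofReal (K / a) := by
  have hint : ∫ t in Ioi (0 : ℝ), K * Real.exp (-a * t) = K / a := by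
    rw [integral_const_mul, integral_exp_mul_Ioi (neg_lt_zero.2 ha)]
    simp [div_eq_mul_inv]
  rw [← hint, ofReal_integral_eq_lintegral_ofReal]
  · exact (integrableOn_exp_mul_Ioi (neg_lt_zero.2 ha) 0).const_mul K
  · exact ae_of_all _ fun t => by positivity

lemma ENNReal.rpow_half_le_ofReal_sqrt_div {I : ℝ≥0∞} {μ B : ℝ} (hμ : 0 < μ)
    (h : ENNReal.ofReal μ * I ≤ ENNReal.ofReal B) :
    I ^ ((1 : ℝ) / 2) ≤ ENNReal.ofReal (√(B / μ)) := by
  have hI : I ≤ ENNReal.ofReal (B / μ) := by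
    rw [ENNReal.ofReal_div_of_pos hμ, ENNReal.le_div_iff_mul_le (Or.inl (by simpa using hμ))
      (Or.inl ENNReal.ofReal_ne_top), mul_comm]
    exact h
  rcases le_total B 0 with hB | hB
  · have hB' : B / μ ≤ 0 := div_nonpos_of_nonpos_of_nonneg hB hμ.le
    rw [ENNReal.ofReal_of_nonpos hB', nonpos_iff_eq_zero] at hI
    simp [hI]
  calc I ^ ((1 : ℝ) / 2) ≤ ENNReal.ofReal (B / μ) ^ ((1 : ℝ) / 2) :=
        ENNReal.rpow_le_rpow hI (by norm_num)
    _ = ENNReal.ofReal (√(B / μ)) := by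
        rw [ENNReal.ofReal_rpow_of_nonneg (by positivity) (by norm_num), Real.sqrt_eq_rpow]

section QuadraticCost

variable {E F : Type*} [NormedAddCommGroup E] [InnerProductSpace ℝ E]
  [NormedAddCommGroup F] [InnerProductSpace ℝ F]

/-- The paper's `J(x, u)`; `ENNReal.ofReal` truncates a negative integrand to `0`. -/
noncomputable def quadraticCost (Q : E → E) (R : F → F) (x : ℝ → E) (u : ℝ → F) : ℝ≥0∞ :=
  ∫⁻ t in Ioi (0 : ℝ), ENNReal.ofReal (⟪x t, Q (x t)⟫ + ⟪u t, R (u t)⟫)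

lemma ofReal_mul_lintegral_norm_sq_le_quadraticCost {Q : E → E} {R : F → F} {μ : ℝ}
    (hμ : 0 ≤ μ) (hQ : ∀ x, μ * ‖x‖ ^ 2 ≤ ⟪x, Q x⟫) (hR : ∀ u, 0 ≤ ⟪u, R u⟫)
    (x : ℝ → E) (u : ℝ → F) :
    ENNReal.ofReal μ * ∫⁻ t in Ioi (0 : ℝ), ENNReal.ofReal (‖x t‖ ^ 2) ≤
      quadraticCost Q R x u := by
  rw [quadraticCost, ← lintegral_const_mul' _ _ ENNReal.ofReal_ne_top]
  refine lintegral_mono fun t => ?_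
  rw [← ENNReal.ofReal_mul hμ]
  exact ENNReal.ofReal_le_ofReal (by linarith [hQ (x t), hR (u t)])

lemma quadraticCost_le_of_norm_le_exp {Q : E → E} {R : F → F} {M_Q M_R C σ a : ℝ}
    (hMQ : 0 ≤ M_Q) (hMR : 0 ≤ M_R) (hσ : 0 < σ)
    (hQ : ∀ x, ‖Q x‖ ≤ M_Q * ‖x‖) (hR : ∀ u, ‖R u‖ ≤ M_R * ‖u‖)
    {x : ℝ → E} {u : ℝ → F}
    (hx : ∀ t ≥ (0 : ℝ), ‖x t‖ ≤ C * Real.exp (-σ * t) * a)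
    (hu : ∀ t ≥ (0 : ℝ), ‖u t‖ ≤ C * Real.exp (-σ * t) * a) :
    quadraticCost Q R x u ≤ ENNReal.ofReal ((M_Q + M_R) * (C * a) ^ 2 / (2 * σ)) := by
  rw [quadraticCost, ← lintegral_ofReal_mul_exp_neg_mul_Ioi (by positivity) (by positivity)]
  refine setLIntegral_mono' measurableSet_Ioi fun t ht => ENNReal.ofReal_le_ofReal ?_
  have ht : (0 : ℝ) ≤ t := le_of_lt ht
  have hexp : Real.exp (-σ * t) ^ 2 = Real.exp (-(2 * σ) * t) := by
    rw [← Real.exp_nat_mul]; ring_nf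
  calc ⟪x t, Q (x t)⟫ + ⟪u t, R (u t)⟫ ≤ M_Q * ‖x t‖ ^ 2 + M_R * ‖u t‖ ^ 2 :=
        add_le_add (real_inner_map_self_le_of_norm_map_le hQ _)
          (real_inner_map_self_le_of_norm_map_le hR _)
    _ ≤ M_Q * (C * Real.exp (-σ * t) * a) ^ 2 + M_R * (C * Real.exp (-σ * t) * a) ^ 2 := by
        gcongr
        exacts [hx t ht, hu t ht]
    _ = (M_Q + M_R) * (C * a) ^ 2 * Real.exp (-(2 * σ) * t) := by rw [← hexp]; ring

end QuadraticCost

theorem initial_perturbation_L2_bound_general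
    (s : ℕ) (n m : Fin s → ℕ)
    -- the state cost matrix Q, symmetric and positive definite
    (Q : PiLp 2 (fun i : Fin s => EuclideanSpace ℝ (Fin (n i))) →L[ℝ]
         PiLp 2 (fun i : Fin s => EuclideanSpace ℝ (Fin (n i))))
    (μ M_Q : ℝ) (hμ : 0 < μ) (hMQ : 0 < M_Q)
    (hQlb : ∀ x, μ * ‖x‖ ^ 2 ≤ ⟪x, Q x⟫)
    (hQub : ∀ x, ‖Q x‖ ≤ M_Q * ‖x‖)
    -- the control cost matrix R, symmetric positive semidefinite
    (R : PiLp 2 (fun i : Fin s => EuclideanSpace ℝ (Fin (m i))) →L[ℝ]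
         PiLp 2 (fun i : Fin s => EuclideanSpace ℝ (Fin (m i))))
    (hRpsd : ∀ u, 0 ≤ ⟪u, R u⟫)
    (M_R : ℝ) (hMR : 0 < M_R)
    (hRub : ∀ u, ‖R u‖ ≤ M_R * ‖u‖)
    -- the decoupled dynamics
    (f : ∀ i : Fin s, EuclideanSpace ℝ (Fin (n i)) × EuclideanSpace ℝ (Fin (m i)) →
          EuclideanSpace ℝ (Fin (n i)))
    -- the initial value: localized perturbation at node i*
    (istar : Fin s)
    (x0 : PiLp 2 (fun i : Fin s => EuclideanSpace ℝ (Fin (n i))))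
    (hx0_zero : ∀ i, i ≠ istar → x0 i = 0)
    -- Assumption 1: exponentially decaying admissible pair from x0
    (C σ : ℝ) (hC : 0 < C) (hσ : 0 < σ)
    (xa : ℝ → PiLp 2 (fun i : Fin s => EuclideanSpace ℝ (Fin (n i))))
    (ua : ℝ → PiLp 2 (fun i : Fin s => EuclideanSpace ℝ (Fin (m i))))
    (hxa_cont : ContinuousOn xa (Set.Ici 0))
    (hua_meas : ∀ i, Measurable fun t => ua t i)
    (hxa_init : xa 0 = x0)
    (hxa_ode : ∀ (i : Fin s), ∀ t ≥ (0:ℝ),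
      HasDerivAt (fun τ => xa τ i) (f i (xa t i, ua t i)) t)
    (hxa_dec : ∀ t ≥ (0:ℝ), ‖xa t‖ ≤ C * Real.exp (-σ * t) * ‖x0‖)
    (hua_dec : ∀ t ≥ (0:ℝ), ‖ua t‖ ≤ C * Real.exp (-σ * t) * ‖x0‖)
    -- the optimal admissible pair (x*, u*) from x0
    (xs : ℝ → PiLp 2 (fun i : Fin s => EuclideanSpace ℝ (Fin (n i))))
    (us : ℝ → PiLp 2 (fun i : Fin s => EuclideanSpace ℝ (Fin (m i))))
    (hopt : ∀ (x : ℝ → PiLp 2 (fun i : Fin s => EuclideanSpace ℝ (Fin (n i))))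
              (u : ℝ → PiLp 2 (fun i : Fin s => EuclideanSpace ℝ (Fin (m i)))),
      ContinuousOn x (Set.Ici 0) → (∀ i, Measurable fun t => u t i) → x 0 = x0 →
      (∀ (i : Fin s), ∀ t ≥ (0:ℝ),
        HasDerivAt (fun τ => x τ i) (f i (x t i, u t i)) t) →
      (∫⁻ t in Set.Ioi (0:ℝ),
          ENNReal.ofReal (⟪xs t, Q (xs t)⟫ + ⟪us t, R (us t)⟫)) ≤
        ∫⁻ t in Set.Ioi (0:ℝ),
          ENNReal.ofReal (⟪x t, Q (x t)⟫ + ⟪u t, R (u t)⟫)) :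
    (∫⁻ t in Set.Ioi (0:ℝ), ENNReal.ofReal (‖xs t‖ ^ 2)) ^ ((1:ℝ)/2) ≤
      ENNReal.ofReal (C * Real.sqrt ((M_Q + M_R) / (2 * σ * μ)) * ‖x0 istar‖) := by
  have hcost : ENNReal.ofReal μ * ∫⁻ t in Ioi (0 : ℝ), ENNReal.ofReal (‖xs t‖ ^ 2) ≤
      ENNReal.ofReal ((M_Q + M_R) * (C * ‖x0‖) ^ 2 / (2 * σ)) :=
    calc _ ≤ quadraticCost Q R xs us :=
          ofReal_mul_lintegral_norm_sq_le_quadraticCost hμ.le hQlb hRpsd xs us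
      _ ≤ quadraticCost Q R xa ua := hopt xa ua hxa_cont hua_meas hxa_init hxa_ode
      _ ≤ _ := quadraticCost_le_of_norm_le_exp hMQ.le hMR.le hσ hQub hRub hxa_dec hua_dec
  have hsqrt : √((M_Q + M_R) * (C * ‖x0‖) ^ 2 / (2 * σ) / μ) =
      C * √((M_Q + M_R) / (2 * σ * μ)) * ‖x0 istar‖ := by
    rw [PiLp.norm_eq_norm_apply_of_forall_ne hx0_zero,
      show (M_Q + M_R) * (C * ‖x0 istar‖) ^ 2 / (2 * σ) / μ =
        (C * ‖x0 istar‖) ^ 2 * ((M_Q + M_R) / (2 * σ * μ)) by field_simp,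
      Real.sqrt_mul (by positivity), Real.sqrt_sq (by positivity)]
    ring
  exact hsqrt ▸ ENNReal.rpow_half_le_ofReal_sqrt_div hμ hcost

/-- **Influence of the initial perturbation (Lemma 4.1).**
Under the exponential asymptotic controllability assumption, the `L²`-norm of an
optimal trajectory emanating from an initial value supported on a single node `i*`
is bounded by `C·√((M_Q + M_R)/(2σμ))·‖x0 i*‖`. -/
theorem initial_perturbation_L2_bound
    (s : ℕ) (hs : 1 ≤ s) (n m : Fin s → ℕ)
    -- the state cost matrix Q, symmetric and positive definite
    (Q : PiLp 2 (fun i : Fin s => EuclideanSpace ℝ (Fin (n i))) →L[ℝ]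
         PiLp 2 (fun i : Fin s => EuclideanSpace ℝ (Fin (n i))))
    (hQsymm : ∀ x y, ⟪x, Q y⟫ = ⟪Q x, y⟫)
    (μ M_Q : ℝ) (hμ : 0 < μ) (hMQ : 0 < M_Q)
    (hQlb : ∀ x, μ * ‖x‖ ^ 2 ≤ ⟪x, Q x⟫)
    (hQub : ∀ x, ‖Q x‖ ≤ M_Q * ‖x‖)
    -- the control cost matrix R, symmetric positive semidefinite
    (R : PiLp 2 (fun i : Fin s => EuclideanSpace ℝ (Fin (m i))) →L[ℝ]
         PiLp 2 (fun i : Fin s => EuclideanSpace ℝ (Fin (m i))))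
    (hRsymm : ∀ u v, ⟪u, R v⟫ = ⟪R u, v⟫)
    (hRpsd : ∀ u, 0 ≤ ⟪u, R u⟫)
    (M_R : ℝ) (hMR : 0 < M_R)
    (hRub : ∀ u, ‖R u‖ ≤ M_R * ‖u‖)
    -- the decoupled dynamics
    (f : ∀ i : Fin s, EuclideanSpace ℝ (Fin (n i)) × EuclideanSpace ℝ (Fin (m i)) →
          EuclideanSpace ℝ (Fin (n i)))
    (hf_cont : ∀ i, Continuous (f i))
    (hf0 : ∀ i, f i (0, 0) = 0)
    -- the initial value: localized perturbation at node i*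
    (istar : Fin s)
    (x0 : PiLp 2 (fun i : Fin s => EuclideanSpace ℝ (Fin (n i))))
    (hx0_ne : x0 istar ≠ 0)
    (hx0_zero : ∀ i, i ≠ istar → x0 i = 0)
    -- Assumption 1: exponentially decaying admissible pair from x0
    (C σ : ℝ) (hC : 0 < C) (hσ : 0 < σ)
    (xa : ℝ → PiLp 2 (fun i : Fin s => EuclideanSpace ℝ (Fin (n i))))
    (ua : ℝ → PiLp 2 (fun i : Fin s => EuclideanSpace ℝ (Fin (m i))))
    (hxa_cont : ContinuousOn xa (Set.Ici 0))
    (hua_meas : ∀ i, Measurable fun t => ua t i)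
    (hxa_init : xa 0 = x0)
    (hxa_ode : ∀ (i : Fin s), ∀ t ≥ (0:ℝ),
      HasDerivAt (fun τ => xa τ i) (f i (xa t i, ua t i)) t)
    (hxa_dec : ∀ t ≥ (0:ℝ), ‖xa t‖ ≤ C * Real.exp (-σ * t) * ‖x0‖)
    (hua_dec : ∀ t ≥ (0:ℝ), ‖ua t‖ ≤ C * Real.exp (-σ * t) * ‖x0‖)
    -- the optimal admissible pair (x*, u*) from x0
    (xs : ℝ → PiLp 2 (fun i : Fin s => EuclideanSpace ℝ (Fin (n i))))
    (us : ℝ → PiLp 2 (fun i : Fin s => EuclideanSpace ℝ (Fin (m i))))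
    (hxs_cont : ContinuousOn xs (Set.Ici 0))
    (hus_meas : ∀ i, Measurable fun t => us t i)
    (hxs_init : xs 0 = x0)
    (hxs_ode : ∀ (i : Fin s), ∀ t ≥ (0:ℝ),
      HasDerivAt (fun τ => xs τ i) (f i (xs t i, us t i)) t)
    (hopt : ∀ (x : ℝ → PiLp 2 (fun i : Fin s => EuclideanSpace ℝ (Fin (n i))))
              (u : ℝ → PiLp 2 (fun i : Fin s => EuclideanSpace ℝ (Fin (m i)))),
      ContinuousOn x (Set.Ici 0) → (∀ i, Measurable fun t => u t i) → x 0 = x0 →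
      (∀ (i : Fin s), ∀ t ≥ (0:ℝ),
        HasDerivAt (fun τ => x τ i) (f i (x t i, u t i)) t) →
      (∫⁻ t in Set.Ioi (0:ℝ),
          ENNReal.ofReal (⟪xs t, Q (xs t)⟫ + ⟪us t, R (us t)⟫)) ≤
        ∫⁻ t in Set.Ioi (0:ℝ),
          ENNReal.ofReal (⟪x t, Q (x t)⟫ + ⟪u t, R (u t)⟫)) :
    (∫⁻ t in Set.Ioi (0:ℝ), ENNReal.ofReal (‖xs t‖ ^ 2)) ^ ((1:ℝ)/2) ≤
      ENNReal.ofReal (C * Real.sqrt ((M_Q + M_R) / (2 * σ * μ)) * ‖x0 istar‖) :=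
  initial_perturbation_L2_bound_general s n m Q μ M_Q hμ hMQ hQlb hQub R hRpsd M_R hMR hRub f istar
    x0 hx0_zero C σ hC hσ xa ua hxa_cont hua_meas hxa_init hxa_ode hxa_dec hua_dec xs us hopt
end

section
/- Let I, J ⊆ Fin s be disjoint index sets and let x̂ : [0,∞) → Π_{j∈J} EuclideanSpace ℝ (Fin (n j)) be measurable with ∫₀^∞ Σ_{j∈J} ‖x̂_j(t)‖² dt < ∞. Let (x̃*, ũ*) be a reduced admissible pair from the zero initial condition (x_i(0) = 0 for all i ∈ I) such that the function t ↦ ℓ_I(x̃*(t), ũ*(t), x̂(t)) is Lebesgue integrable and J_I(x̃*, ũ*, x̂) ≤ J_I(x, u, x̂) for every reduced admissible pair (x, u) from the zero initial condition whose cost integrand is Lebesgue integrable. Then (∫₀^∞ Σ_{i∈I} ‖x̃*_i(t)‖² dt)^{1/2} ≤ (2·M_Q/μ) · (∫₀^∞ Σ_{j∈J} ‖x̂_j(t)‖² dt)^{1/2}. -/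
open scoped RealInnerProductSpace ENNReal
open MeasureTheory

/-!
Comparing the optimal pair with the admissible pair `(0, 0)`, whose cost vanishes, shows that
the optimal cost is `≤ 0`. Pointwise, coercivity and boundedness of `Q` give
`ℓ_I ≥ μ‖x‖² - 2 M_Q ‖x‖ ‖x̂‖`, and absorbing the cross term by
`2 M_Q ‖x‖ ‖x̂‖ ≤ (μ/2)‖x‖² + (2 M_Q²/μ)‖x̂‖²` yields `‖x‖² ≤ (2/μ) ℓ_I + (2 M_Q/μ)² ‖x̂‖²`.
Integrating over `(0, ∞)` and dropping the nonpositive cost term gives the claim.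
-/

theorem norm_sq_le_of_coercive {E : Type*} [NormedAddCommGroup E] [InnerProductSpace ℝ E]
    {Q : E → E} {μ M : ℝ} (hμ : 0 < μ) (hQlb : ∀ x, μ * ‖x‖ ^ 2 ≤ ⟪x, Q x⟫)
    (hQub : ∀ x, ‖Q x‖ ≤ M * ‖x‖) (x y : E) :
    ‖x‖ ^ 2 ≤ 2 / μ * (⟪x, Q x⟫ + ⟪x, Q y⟫ + ⟪y, Q x⟫) + (2 * M / μ) ^ 2 * ‖y‖ ^ 2 := by
  have hbound : ∀ u v, |⟪u, Q v⟫| ≤ M * ‖u‖ * ‖v‖ := fun u v => calc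
    |⟪u, Q v⟫| ≤ ‖u‖ * ‖Q v‖ := abs_real_inner_le_norm u (Q v)
    _ ≤ ‖u‖ * (M * ‖v‖) := by gcongr; exact hQub v
    _ = M * ‖u‖ * ‖v‖ := by ring
  have hcross : μ * ‖x‖ ^ 2 - 2 * M * ‖x‖ * ‖y‖ ≤ ⟪x, Q x⟫ + ⟪x, Q y⟫ + ⟪y, Q x⟫ := by
    linarith [hQlb x, neg_abs_le ⟪x, Q y⟫, neg_abs_le ⟪y, Q x⟫, hbound x y, hbound y x]
  have hsq := sq_nonneg (‖x‖ - 2 * M / μ * ‖y‖)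
  calc ‖x‖ ^ 2 ≤ 2 / μ * (μ * ‖x‖ ^ 2 - 2 * M * ‖x‖ * ‖y‖) + (2 * M / μ) ^ 2 * ‖y‖ ^ 2 := by
        have : 2 / μ * (μ * ‖x‖ ^ 2 - 2 * M * ‖x‖ * ‖y‖)
            = 2 * ‖x‖ ^ 2 - 2 * (2 * M / μ) * ‖x‖ * ‖y‖ := by field_simp
        nlinarith
    _ ≤ _ := by gcongr

section ExtendByZero

variable {ι : Type*} [Fintype ι] [DecidableEq ι] {E : ι → Type*}

theorem Finset.sum_univ_dite_mem {M : Type*} [AddCommMonoid M] (I : Finset ι) (F : I → M) :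
    ∑ i, (if h : i ∈ I then F ⟨i, h⟩ else 0) = ∑ i : I, F i := by
  rw [← Finset.sum_subset I.subset_univ fun i _ hi => dif_neg hi, ← Finset.sum_attach,
    Finset.univ_eq_attach]
  exact Finset.sum_congr rfl fun i _ => dif_pos i.2

variable [∀ i, NormedAddCommGroup (E i)]

def extendByZero (I : Finset ι) (x : ∀ i : I, E i) : PiLp 2 E :=
  WithLp.toLp 2 fun i => if h : i ∈ I then x ⟨i, h⟩ else 0

theorem sum_apply_extendByZero {M : Type*} [AddCommMonoid M] (g : ∀ i, E i → M)
    (hg : ∀ i, g i 0 = 0) (I : Finset ι) (x : ∀ i : I, E i) :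
    ∑ i, g i (extendByZero I x i) = ∑ i : I, g i (x i) := by
  rw [← Finset.sum_univ_dite_mem]
  refine Finset.sum_congr rfl fun i _ => ?_
  simp only [extendByZero, PiLp.toLp_apply]
  split_ifs <;> simp [hg]

theorem norm_sq_extendByZero (I : Finset ι) (x : ∀ i : I, E i) :
    ‖extendByZero I x‖ ^ 2 = ∑ i : I, ‖x i‖ ^ 2 := by
  rw [PiLp.norm_sq_eq_of_L2]
  exact sum_apply_extendByZero (fun _ v => ‖v‖ ^ 2) (fun _ => by simp) I x

variable [∀ i, InnerProductSpace ℝ (E i)]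

theorem inner_extendByZero_map_extendByZero (Q : PiLp 2 E → PiLp 2 E)
    (Qblk : ∀ i j, E j →ₗ[ℝ] E i) (hQblk : ∀ x i, Q x i = ∑ j, Qblk i j (x j))
    (I K : Finset ι) (x : ∀ i : I, E i) (y : ∀ k : K, E k) :
    ⟪extendByZero I x, Q (extendByZero K y)⟫ = ∑ i : I, ∑ k : K, ⟪x i, Qblk i k (y k)⟫ := by
  rw [PiLp.inner_apply]
  simp_rw [hQblk, sum_apply_extendByZero (fun j => Qblk _ j) (fun j => map_zero _)]
  rw [sum_apply_extendByZero (fun i v => ⟪v, ∑ k : K, Qblk i k (y k)⟫) (fun _ => inner_zero_left _)]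
  simp_rw [inner_sum]

theorem sum_norm_sq_le_blockCost {Q : PiLp 2 E → PiLp 2 E} {μ M : ℝ} (hμ : 0 < μ)
    (hQlb : ∀ x, μ * ‖x‖ ^ 2 ≤ ⟪x, Q x⟫) (hQub : ∀ x, ‖Q x‖ ≤ M * ‖x‖)
    (Qblk : ∀ i j, E j →ₗ[ℝ] E i) (hQblk : ∀ x i, Q x i = ∑ j, Qblk i j (x j))
    (I J : Finset ι) (x : ∀ i : I, E i) (y : ∀ j : J, E j) :
    ∑ i : I, ‖x i‖ ^ 2 ≤
      2 / μ * ((∑ i : I, ∑ j : J, (⟪x i, Qblk i j (y j)⟫ + ⟪y j, Qblk j i (x i)⟫)) +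
        ∑ i : I, ∑ i' : I, ⟪x i, Qblk i i' (x i')⟫) +
      (2 * M / μ) ^ 2 * ∑ j : J, ‖y j‖ ^ 2 := by
  have h := norm_sq_le_of_coercive hμ hQlb hQub (extendByZero I x) (extendByZero J y)
  simp only [norm_sq_extendByZero, inner_extendByZero_map_extendByZero Q Qblk hQblk] at h
  convert h using 3
  rw [Finset.sum_comm (s := (Finset.univ : Finset J)), ← Finset.sum_add_distrib]
  simp only [Finset.sum_add_distrib]
  ring

end ExtendByZero

theorem lintegral_ofReal_le_mul_of_le_add {α : Type*} [MeasurableSpace α] {ν : Measure α}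
    {A B L : α → ℝ} {κ C : ℝ} (hκ : 0 ≤ κ) (hC : 0 ≤ C) (hA : ∀ x, 0 ≤ A x)
    (hAle : ∀ x, A x ≤ κ * L x + C * B x) (hL : Integrable L ν) (hL0 : ∫ x, L x ∂ν ≤ 0)
    (hB : Integrable B ν) (hB0 : ∀ x, 0 ≤ B x) :
    ∫⁻ x, ENNReal.ofReal (A x) ∂ν ≤ ENNReal.ofReal C * ∫⁻ x, ENNReal.ofReal (B x) ∂ν := by
  have hint : Integrable (fun x => κ * L x + C * B x) ν := (hL.const_mul κ).add (hB.const_mul C)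
  calc ∫⁻ x, ENNReal.ofReal (A x) ∂ν ≤ ∫⁻ x, ENNReal.ofReal (κ * L x + C * B x) ∂ν :=
        lintegral_mono fun x => ENNReal.ofReal_le_ofReal (hAle x)
    _ = ENNReal.ofReal (∫ x, κ * L x + C * B x ∂ν) :=
        (ofReal_integral_eq_lintegral_ofReal hint
          (Filter.Eventually.of_forall fun x => (hA x).trans (hAle x))).symm
    _ ≤ ENNReal.ofReal (C * ∫ x, B x ∂ν) := by
        rw [integral_add (hL.const_mul κ) (hB.const_mul C), integral_const_mul, integral_const_mul]
        gcongr
        linarith [mul_nonpos_of_nonneg_of_nonpos hκ hL0]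
    _ = ENNReal.ofReal C * ∫⁻ x, ENNReal.ofReal (B x) ∂ν := by
        rw [ENNReal.ofReal_mul hC,
          ofReal_integral_eq_lintegral_ofReal hB (Filter.Eventually.of_forall hB0)]

theorem ENNReal.rpow_half_le_of_le_sq_mul {x y a : ℝ≥0∞} (h : x ≤ a ^ 2 * y) :
    x ^ (1 / 2 : ℝ) ≤ a * y ^ (1 / 2 : ℝ) := by
  calc x ^ (1 / 2 : ℝ) ≤ (a ^ 2 * y) ^ (1 / 2 : ℝ) := by gcongr
    _ = a * y ^ (1 / 2 : ℝ) := by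
      rw [ENNReal.mul_rpow_of_nonneg _ _ (by norm_num), one_div]
      congr
      exact_mod_cast ENNReal.pow_rpow_inv_natCast two_ne_zero a

theorem propagation_of_perturbation_general
    (s : ℕ) (n m : Fin s → ℕ)
    -- the state cost matrix Q, symmetric and positive definite, with blocks Qblk
    (Q : PiLp 2 (fun i : Fin s => EuclideanSpace ℝ (Fin (n i))) →L[ℝ]
         PiLp 2 (fun i : Fin s => EuclideanSpace ℝ (Fin (n i))))
    (μ M_Q : ℝ) (hμ : 0 < μ) (hMQ : 0 < M_Q)
    (hQlb : ∀ x, μ * ‖x‖ ^ 2 ≤ ⟪x, Q x⟫)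
    (hQub : ∀ x, ‖Q x‖ ≤ M_Q * ‖x‖)
    (Qblk : ∀ i j : Fin s, EuclideanSpace ℝ (Fin (n j)) →ₗ[ℝ] EuclideanSpace ℝ (Fin (n i)))
    (hQblk : ∀ x (i : Fin s), Q x i = ∑ j, Qblk i j (x j))
    -- the control cost blocks, symmetric positive semidefinite
    (Rblk : ∀ i : Fin s, EuclideanSpace ℝ (Fin (m i)) →ₗ[ℝ] EuclideanSpace ℝ (Fin (m i)))
    (hRpsd : ∀ (i : Fin s) v, 0 ≤ ⟪v, Rblk i v⟫)
    -- the decoupled dynamics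
    (f : ∀ i : Fin s, EuclideanSpace ℝ (Fin (n i)) × EuclideanSpace ℝ (Fin (m i)) →
          EuclideanSpace ℝ (Fin (n i)))
    (hf0 : ∀ i, f i (0, 0) = 0)
    -- disjoint index sets I and J
    (I J : Finset (Fin s))
    -- the prescribed trajectories x̂ on J, measurable with finite L²-norm
    (xhat : ℝ → ∀ j : J, EuclideanSpace ℝ (Fin (n ↑j)))
    (hxhat_meas : Measurable xhat)
    (hxhat_L2 : (∫⁻ t in Set.Ioi (0:ℝ),
        ENNReal.ofReal (∑ j : J, ‖xhat t j‖ ^ 2)) < ⊤)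
    -- the reduced running cost ℓ_I
    (ellI : (∀ i : I, EuclideanSpace ℝ (Fin (n ↑i))) →
            (∀ i : I, EuclideanSpace ℝ (Fin (m ↑i))) →
            (∀ j : J, EuclideanSpace ℝ (Fin (n ↑j))) → ℝ)
    (hellI : ∀ xI uI xJ, ellI xI uI xJ =
      (∑ i : I, ∑ j : J, (⟪xI i, Qblk ↑i ↑j (xJ j)⟫ + ⟪xJ j, Qblk ↑j ↑i (xI i)⟫)) +
      (∑ i : I, ∑ i' : I, ⟪xI i, Qblk ↑i ↑i' (xI i')⟫) +
      (∑ i : I, ⟪uI i, Rblk ↑i (uI i)⟫))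
    -- the optimal reduced admissible pair (x̃*, ũ*) from the zero initial condition
    (xt : ℝ → ∀ i : I, EuclideanSpace ℝ (Fin (n ↑i)))
    (ut : ℝ → ∀ i : I, EuclideanSpace ℝ (Fin (m ↑i)))
    (hxt_int : IntegrableOn (fun t => ellI (xt t) (ut t) (xhat t)) (Set.Ioi 0))
    (hopt : ∀ (x : ℝ → ∀ i : I, EuclideanSpace ℝ (Fin (n ↑i)))
              (u : ℝ → ∀ i : I, EuclideanSpace ℝ (Fin (m ↑i))),
      (∀ i : I, ContinuousOn (fun t => x t i) (Set.Ici 0)) →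
      (∀ i : I, Measurable fun t => u t i) →
      (∀ i : I, x 0 i = 0) →
      (∀ (i : I), ∀ t ≥ (0:ℝ),
        HasDerivAt (fun τ => x τ i) (f ↑i (x t i, u t i)) t) →
      IntegrableOn (fun t => ellI (x t) (u t) (xhat t)) (Set.Ioi 0) →
      (∫ t in Set.Ioi (0:ℝ), ellI (xt t) (ut t) (xhat t)) ≤
        ∫ t in Set.Ioi (0:ℝ), ellI (x t) (u t) (xhat t)) :
    (∫⁻ t in Set.Ioi (0:ℝ),
        ENNReal.ofReal (∑ i : I, ‖xt t i‖ ^ 2)) ^ ((1:ℝ)/2) ≤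
      ENNReal.ofReal (2 * M_Q / μ) *
        (∫⁻ t in Set.Ioi (0:ℝ),
          ENNReal.ofReal (∑ j : J, ‖xhat t j‖ ^ 2)) ^ ((1:ℝ)/2) := by
  have hB_nonneg : ∀ t, 0 ≤ ∑ j : J, ‖xhat t j‖ ^ 2 := fun t => by positivity
  have hB_int : IntegrableOn (fun t => ∑ j : J, ‖xhat t j‖ ^ 2) (Set.Ioi 0) :=
    (lintegral_ofReal_ne_top_iff_integrable
      (by fun_prop : Measurable fun t => ∑ j : J, ‖xhat t j‖ ^ 2).aestronglyMeasurable
      (Filter.Eventually.of_forall hB_nonneg)).1 hxhat_L2.ne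
  have hpointwise : ∀ t, ∑ i : I, ‖xt t i‖ ^ 2 ≤
      2 / μ * ellI (xt t) (ut t) (xhat t) + (2 * M_Q / μ) ^ 2 * ∑ j : J, ‖xhat t j‖ ^ 2 := by
    intro t
    have hR : 0 ≤ ∑ i : I, ⟪ut t i, Rblk i (ut t i)⟫ := Finset.sum_nonneg fun i _ => hRpsd i _
    refine (sum_norm_sq_le_blockCost hμ hQlb hQub Qblk hQblk I J (xt t) (xhat t)).trans ?_
    rw [hellI]
    gcongr 2 / μ * ?_ + _
    linarith
  have hzero_cost : ∀ t, ellI 0 0 (xhat t) = 0 := fun t => by simp [hellI]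
  have hopt_le_zero : ∫ t in Set.Ioi (0:ℝ), ellI (xt t) (ut t) (xhat t) ≤ 0 := by
    simpa [hzero_cost] using hopt (fun _ => 0) (fun _ => 0) (fun _ => continuousOn_const)
      (fun _ => measurable_const) (fun _ => rfl)
      (fun i t _ => hf0 i ▸ hasDerivAt_const t 0) (by simp [hzero_cost])
  refine ENNReal.rpow_half_le_of_le_sq_mul ?_
  rw [← ENNReal.ofReal_pow (by positivity)]
  exact lintegral_ofReal_le_mul_of_le_add (by positivity) (by positivity) (fun t => by positivity)
    hpointwise hxt_int hopt_le_zero hB_int hB_nonneg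

/-- **Propagation of the perturbation (Lemma 4.2).**
For the reduced optimal control problem on an index set `I` with externally
prescribed trajectories `x̂` on a disjoint index set `J`, the optimal solution
started at the zero initial condition satisfies
`‖x̃*_I‖_{L²} ≤ (2 M_Q/μ)·‖x̂_J‖_{L²}`. -/
theorem propagation_of_perturbation
    (s : ℕ) (hs : 1 ≤ s) (n m : Fin s → ℕ)
    -- the state cost matrix Q, symmetric and positive definite, with blocks Qblk
    (Q : PiLp 2 (fun i : Fin s => EuclideanSpace ℝ (Fin (n i))) →L[ℝ]
         PiLp 2 (fun i : Fin s => EuclideanSpace ℝ (Fin (n i))))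
    (hQsymm : ∀ x y, ⟪x, Q y⟫ = ⟪Q x, y⟫)
    (μ M_Q : ℝ) (hμ : 0 < μ) (hMQ : 0 < M_Q)
    (hQlb : ∀ x, μ * ‖x‖ ^ 2 ≤ ⟪x, Q x⟫)
    (hQub : ∀ x, ‖Q x‖ ≤ M_Q * ‖x‖)
    (Qblk : ∀ i j : Fin s, EuclideanSpace ℝ (Fin (n j)) →ₗ[ℝ] EuclideanSpace ℝ (Fin (n i)))
    (hQblk : ∀ x (i : Fin s), Q x i = ∑ j, Qblk i j (x j))
    -- the control cost blocks, symmetric positive semidefinite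
    (Rblk : ∀ i : Fin s, EuclideanSpace ℝ (Fin (m i)) →ₗ[ℝ] EuclideanSpace ℝ (Fin (m i)))
    (hRsymm : ∀ (i : Fin s) v w, ⟪v, Rblk i w⟫ = ⟪Rblk i v, w⟫)
    (hRpsd : ∀ (i : Fin s) v, 0 ≤ ⟪v, Rblk i v⟫)
    -- the decoupled dynamics
    (f : ∀ i : Fin s, EuclideanSpace ℝ (Fin (n i)) × EuclideanSpace ℝ (Fin (m i)) →
          EuclideanSpace ℝ (Fin (n i)))
    (hf_cont : ∀ i, Continuous (f i))
    (hf0 : ∀ i, f i (0, 0) = 0)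
    -- disjoint index sets I and J
    (I J : Finset (Fin s)) (hIJ : Disjoint I J)
    -- the prescribed trajectories x̂ on J, measurable with finite L²-norm
    (xhat : ℝ → ∀ j : J, EuclideanSpace ℝ (Fin (n ↑j)))
    (hxhat_meas : Measurable xhat)
    (hxhat_L2 : (∫⁻ t in Set.Ioi (0:ℝ),
        ENNReal.ofReal (∑ j : J, ‖xhat t j‖ ^ 2)) < ⊤)
    -- the reduced running cost ℓ_I
    (ellI : (∀ i : I, EuclideanSpace ℝ (Fin (n ↑i))) →
            (∀ i : I, EuclideanSpace ℝ (Fin (m ↑i))) →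
            (∀ j : J, EuclideanSpace ℝ (Fin (n ↑j))) → ℝ)
    (hellI : ∀ xI uI xJ, ellI xI uI xJ =
      (∑ i : I, ∑ j : J, (⟪xI i, Qblk ↑i ↑j (xJ j)⟫ + ⟪xJ j, Qblk ↑j ↑i (xI i)⟫)) +
      (∑ i : I, ∑ i' : I, ⟪xI i, Qblk ↑i ↑i' (xI i')⟫) +
      (∑ i : I, ⟪uI i, Rblk ↑i (uI i)⟫))
    -- the optimal reduced admissible pair (x̃*, ũ*) from the zero initial condition
    (xt : ℝ → ∀ i : I, EuclideanSpace ℝ (Fin (n ↑i)))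
    (ut : ℝ → ∀ i : I, EuclideanSpace ℝ (Fin (m ↑i)))
    (hxt_cont : ∀ i : I, ContinuousOn (fun t => xt t i) (Set.Ici 0))
    (hut_meas : ∀ i : I, Measurable fun t => ut t i)
    (hxt_init : ∀ i : I, xt 0 i = 0)
    (hxt_ode : ∀ (i : I), ∀ t ≥ (0:ℝ),
      HasDerivAt (fun τ => xt τ i) (f ↑i (xt t i, ut t i)) t)
    (hxt_int : IntegrableOn (fun t => ellI (xt t) (ut t) (xhat t)) (Set.Ioi 0))
    (hopt : ∀ (x : ℝ → ∀ i : I, EuclideanSpace ℝ (Fin (n ↑i)))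
              (u : ℝ → ∀ i : I, EuclideanSpace ℝ (Fin (m ↑i))),
      (∀ i : I, ContinuousOn (fun t => x t i) (Set.Ici 0)) →
      (∀ i : I, Measurable fun t => u t i) →
      (∀ i : I, x 0 i = 0) →
      (∀ (i : I), ∀ t ≥ (0:ℝ),
        HasDerivAt (fun τ => x τ i) (f ↑i (x t i, u t i)) t) →
      IntegrableOn (fun t => ellI (x t) (u t) (xhat t)) (Set.Ioi 0) →
      (∫ t in Set.Ioi (0:ℝ), ellI (xt t) (ut t) (xhat t)) ≤
        ∫ t in Set.Ioi (0:ℝ), ellI (x t) (u t) (xhat t)) :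
    (∫⁻ t in Set.Ioi (0:ℝ),
        ENNReal.ofReal (∑ i : I, ‖xt t i‖ ^ 2)) ^ ((1:ℝ)/2) ≤
      ENNReal.ofReal (2 * M_Q / μ) *
        (∫⁻ t in Set.Ioi (0:ℝ),
          ENNReal.ofReal (∑ j : J, ‖xhat t j‖ ^ 2)) ^ ((1:ℝ)/2) :=
  propagation_of_perturbation_general s n m Q μ M_Q hμ hMQ hQlb hQub Qblk hQblk Rblk hRpsd f hf0 I J
    xhat hxhat_meas hxhat_L2 ellI hellI xt ut hxt_int hopt
end

section
/- Let E be a finite-dimensional real inner product space and Q : E →L[ℝ] E symmetric with μ‖v‖² ≤ ⟪v, Q v⟫ and ‖Q v‖ ≤ M_Q‖v‖ for all v ∈ E, where μ, M_Q > 0. Let f, g : [0,∞) → E be measurable with ∫₀^∞ ‖g(t)‖² dt < ∞, such that the function t ↦ ⟪f(t), Q g(t)⟫ + ⟪g(t), Q f(t)⟫ + ⟪f(t), Q f(t)⟫ is Lebesgue integrable with ∫₀^∞ (⟪f(t), Q g(t)⟫ + ⟪g(t), Q f(t)⟫ + ⟪f(t), Q f(t)⟫) dt ≤ 0. Then f is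 square-integrable and (∫₀^∞ ‖f(t)‖² dt)^{1/2} ≤ (2·M_Q/μ) · (∫₀^∞ ‖g(t)‖² dt)^{1/2}. -/
/-!
By symmetry of `Q` the integrand is `S = 2⟪f, Q g⟫ + ⟪f, Q f⟫`. Coercivity, the bound on `Q` and
AM-GM give pointwise `μ ‖f‖² ≤ S + (μ/2) ‖f‖² + (2 M_Q² / μ) ‖g‖²`, i.e.
`‖f‖² ≤ (2/μ) S + (2 M_Q / μ)² ‖g‖²`. The right-hand side is integrable and `∫ S ≤ 0`, so
integrating gives `‖f‖²_{L²} ≤ (2 M_Q / μ)² ‖g‖²_{L²}`.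
-/

open scoped RealInnerProductSpace ENNReal
open MeasureTheory

theorem ENNReal.rpow_one_half_le_mul_of_le_sq_mul {x y a : ℝ≥0∞} (h : x ≤ a ^ 2 * y) :
    x ^ ((1:ℝ)/2) ≤ a * y ^ ((1:ℝ)/2) := by
  calc x ^ ((1:ℝ)/2) ≤ (a ^ 2 * y) ^ ((1:ℝ)/2) := ENNReal.rpow_le_rpow h (by norm_num)
    _ = a * y ^ ((1:ℝ)/2) := by
      rw [ENNReal.mul_rpow_of_nonneg _ _ (by norm_num), ← ENNReal.rpow_natCast,
        ← ENNReal.rpow_mul]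
      norm_num

theorem sq_norm_le_of_symmetric_coercive {E : Type*} [NormedAddCommGroup E]
    [InnerProductSpace ℝ E] {Q : E → E} (hQsymm : ∀ v w : E, ⟪v, Q w⟫ = ⟪Q v, w⟫)
    {μ M : ℝ} (hμ : 0 < μ) (hQlb : ∀ v : E, μ * ‖v‖ ^ 2 ≤ ⟪v, Q v⟫)
    (hQub : ∀ v : E, ‖Q v‖ ≤ M * ‖v‖) (x y : E) :
    ‖x‖ ^ 2 ≤ 2 / μ * (⟪x, Q y⟫ + ⟪y, Q x⟫ + ⟪x, Q x⟫) + (2 * M / μ) ^ 2 * ‖y‖ ^ 2 := by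
  have hcross : -(M * (‖x‖ * ‖y‖)) ≤ ⟪x, Q y⟫ :=
    calc -(M * (‖x‖ * ‖y‖)) ≤ -(‖x‖ * ‖Q y‖) := by
          nlinarith [hQub y, norm_nonneg x]
      _ ≤ ⟪x, Q y⟫ := neg_le_of_abs_le (abs_real_inner_le_norm _ _)
  have hswap : ⟪y, Q x⟫ = ⟪x, Q y⟫ := by rw [hQsymm, real_inner_comm]
  -- the last summand is the completed square behind `2 M ‖x‖ ‖y‖ ≤ (μ/2) ‖x‖² + (2 M² / μ) ‖y‖²`
  have hsplit : 2 / μ * (⟪x, Q y⟫ + ⟪y, Q x⟫ + ⟪x, Q x⟫) + (2 * M / μ) ^ 2 * ‖y‖ ^ 2 - ‖x‖ ^ 2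
      = 2 / μ * (2 * (⟪x, Q y⟫ + M * (‖x‖ * ‖y‖)) + (⟪x, Q x⟫ - μ * ‖x‖ ^ 2)
          + (μ * ‖x‖ - 2 * M * ‖y‖) ^ 2 / (2 * μ)) := by
    rw [hswap]
    field_simp
    ring
  have hsquare : 0 ≤ (μ * ‖x‖ - 2 * M * ‖y‖) ^ 2 / (2 * μ) := by positivity
  rw [← sub_nonneg, hsplit]
  exact mul_nonneg (by positivity) (by linarith [hQlb x])

theorem lintegral_ofReal_le_mul_of_le_add_of_integral_nonpos {α : Type*} [MeasurableSpace α]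
    {ν : Measure α} {F S G : α → ℝ} {a b : ℝ} (ha : 0 ≤ a)
    (hF : AEStronglyMeasurable F ν) (hF0 : 0 ≤ᵐ[ν] F)
    (hS : Integrable S ν) (hS0 : ∫ x, S x ∂ν ≤ 0) (hG : Integrable G ν) (hG0 : 0 ≤ᵐ[ν] G)
    (hle : ∀ᵐ x ∂ν, F x ≤ a * S x + b * G x) :
    ∫⁻ x, ENNReal.ofReal (F x) ∂ν ≤ ENNReal.ofReal b * ∫⁻ x, ENNReal.ofReal (G x) ∂ν := by
  have hbound : Integrable (fun x => a * S x + b * G x) ν := (hS.const_mul a).add (hG.const_mul b)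
  have hFint : Integrable F ν := hbound.mono' hF <| by
    filter_upwards [hF0, hle] with x h0 h
    rwa [Real.norm_of_nonneg h0]
  have hint : ∫ x, F x ∂ν ≤ b * ∫ x, G x ∂ν :=
    calc ∫ x, F x ∂ν ≤ ∫ x, a * S x + b * G x ∂ν := integral_mono_ae hFint hbound hle
      _ = a * ∫ x, S x ∂ν + b * ∫ x, G x ∂ν := by
        rw [integral_add (hS.const_mul a) (hG.const_mul b), integral_const_mul, integral_const_mul]
      _ ≤ b * ∫ x, G x ∂ν := by nlinarith
  rw [← ofReal_integral_eq_lintegral_ofReal hFint hF0,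
    ← ofReal_integral_eq_lintegral_ofReal hG hG0,
    ← ENNReal.ofReal_mul' (integral_nonneg_of_ae hG0)]
  exact ENNReal.ofReal_le_ofReal hint

theorem L2_bound_from_nonpositive_mixed_quadratic_integral_general
    {E : Type*}
    [NormedAddCommGroup E] [InnerProductSpace ℝ E]
    [MeasurableSpace E] [BorelSpace E]
    (Q : E →L[ℝ] E)
    (hQsymm : ∀ v w : E, ⟪v, Q w⟫ = ⟪Q v, w⟫)
    (μ M_Q : ℝ) (hμ : 0 < μ) (hMQ : 0 < M_Q)
    (hQlb : ∀ v : E, μ * ‖v‖ ^ 2 ≤ ⟪v, Q v⟫)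
    (hQub : ∀ v : E, ‖Q v‖ ≤ M_Q * ‖v‖)
    (f g : ℝ → E)
    (hf_meas : Measurable f) (hg_meas : Measurable g)
    (hg_L2 : (∫⁻ t in Set.Ioi (0:ℝ), ENNReal.ofReal (‖g t‖ ^ 2)) < ⊤)
    (h_int : IntegrableOn
      (fun t => ⟪f t, Q (g t)⟫ + ⟪g t, Q (f t)⟫ + ⟪f t, Q (f t)⟫) (Set.Ioi 0))
    (h_nonpos :
      (∫ t in Set.Ioi (0:ℝ),
        (⟪f t, Q (g t)⟫ + ⟪g t, Q (f t)⟫ + ⟪f t, Q (f t)⟫)) ≤ 0) :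
    (∫⁻ t in Set.Ioi (0:ℝ), ENNReal.ofReal (‖f t‖ ^ 2)) < ⊤ ∧
      (∫⁻ t in Set.Ioi (0:ℝ), ENNReal.ofReal (‖f t‖ ^ 2)) ^ ((1:ℝ)/2) ≤
        ENNReal.ofReal (2 * M_Q / μ) *
          (∫⁻ t in Set.Ioi (0:ℝ), ENNReal.ofReal (‖g t‖ ^ 2)) ^ ((1:ℝ)/2) := by
  have hg_sq_nonneg : 0 ≤ᵐ[volume.restrict (Set.Ioi 0)] fun t => ‖g t‖ ^ 2 :=
    ae_of_all _ fun t => sq_nonneg _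
  have hg_sq_int : IntegrableOn (fun t => ‖g t‖ ^ 2) (Set.Ioi 0) :=
    ⟨(hg_meas.norm.pow_const 2).aestronglyMeasurable,
      (hasFiniteIntegral_iff_ofReal hg_sq_nonneg).2 hg_L2⟩
  have hbound := lintegral_ofReal_le_mul_of_le_add_of_integral_nonpos (by positivity)
    (hf_meas.norm.pow_const 2).aestronglyMeasurable (ae_of_all _ fun t => sq_nonneg _)
    h_int h_nonpos hg_sq_int hg_sq_nonneg
    (ae_of_all _ fun t => sq_norm_le_of_symmetric_coercive hQsymm hμ hQlb hQub (f t) (g t))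
  rw [ENNReal.ofReal_pow (by positivity)] at hbound
  exact ⟨hbound.trans_lt (ENNReal.mul_lt_top (by simp) hg_L2),
    ENNReal.rpow_one_half_le_mul_of_le_sq_mul hbound⟩

/-- **Abstract version of Lemma 4.2.**
If `∫₀^∞ (⟪f, Q g⟫ + ⟪g, Q f⟫ + ⟪f, Q f⟫) dt ≤ 0` for a symmetric `Q` with
`μ‖v‖² ≤ ⟪v, Q v⟫` and `‖Q v‖ ≤ M_Q ‖v‖`, and `g ∈ L²`, then `f ∈ L²` with
`‖f‖_{L²} ≤ (2 M_Q / μ)·‖g‖_{L²}`. -/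
theorem L2_bound_from_nonpositive_mixed_quadratic_integral
    {E : Type*}
    [NormedAddCommGroup E] [InnerProductSpace ℝ E] [FiniteDimensional ℝ E]
    [MeasurableSpace E] [BorelSpace E]
    (Q : E →L[ℝ] E)
    (hQsymm : ∀ v w : E, ⟪v, Q w⟫ = ⟪Q v, w⟫)
    (μ M_Q : ℝ) (hμ : 0 < μ) (hMQ : 0 < M_Q)
    (hQlb : ∀ v : E, μ * ‖v‖ ^ 2 ≤ ⟪v, Q v⟫)
    (hQub : ∀ v : E, ‖Q v‖ ≤ M_Q * ‖v‖)
    (f g : ℝ → E)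
    (hf_meas : Measurable f) (hg_meas : Measurable g)
    (hg_L2 : (∫⁻ t in Set.Ioi (0:ℝ), ENNReal.ofReal (‖g t‖ ^ 2)) < ⊤)
    (h_int : IntegrableOn
      (fun t => ⟪f t, Q (g t)⟫ + ⟪g t, Q (f t)⟫ + ⟪f t, Q (f t)⟫) (Set.Ioi 0))
    (h_nonpos :
      (∫ t in Set.Ioi (0:ℝ),
        (⟪f t, Q (g t)⟫ + ⟪g t, Q (f t)⟫ + ⟪f t, Q (f t)⟫)) ≤ 0) :
    (∫⁻ t in Set.Ioi (0:ℝ), ENNReal.ofReal (‖f t‖ ^ 2)) < ⊤ ∧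
      (∫⁻ t in Set.Ioi (0:ℝ), ENNReal.ofReal (‖f t‖ ^ 2)) ^ ((1:ℝ)/2) ≤
        ENNReal.ofReal (2 * M_Q / μ) *
          (∫⁻ t in Set.Ioi (0:ℝ), ENNReal.ofReal (‖g t‖ ^ 2)) ^ ((1:ℝ)/2) :=
  L2_bound_from_nonpositive_mixed_quadratic_integral_general Q hQsymm μ M_Q hμ hMQ hQlb hQub f g
    hf_meas hg_meas hg_L2 h_int h_nonpos
end

section
/- Let c ≥ 0 and C_init, C_prop > 0, and set Ŝ = max(C_init, C_prop), S = 2·Ŝ, q = ⌈S⌉² (which satisfies q ≥ 1), and ρ = 2^{−1/q}. Let (a_k)_{k∈ℕ} be nonnegative reals with Σ_{k∈ℕ} a_k² < ∞, and define b_k = (Σ_{k'≥k} a_{k'}²)^{1/2}. Assume b_0 ≤ C_init·c and b_{k+1} ≤ C_prop·a_k for every k ∈ ℕ. Then b_p ≤ S·ρ^p·c for every p ∈ ℕ. -/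
/-!
Since `b_k² = a_k² + b_{k+1}²` and `b_{k+1} ≤ C_prop a_k`, we get
`(1 + C_prop²) b_{k+1}² ≤ C_prop² b_k²`, so `b` contracts by `θ = C_prop / √(1 + C_prop²)` at
each step and `b_p ≤ θ^p b_0`. Bernoulli's inequality and `q ≥ S² ≥ 4 C_prop²` give
`θ^q ≤ 1/2`, i.e. `θ ≤ ρ`.
-/

lemma le_div_sqrt_one_add_sq_mul {u v w C : ℝ} (hC : 0 ≤ C) (hu : 0 ≤ u) (hv : 0 ≤ v)
    (huvw : u ^ 2 = w ^ 2 + v ^ 2) (hvw : v ≤ C * w) : v ≤ C / √(1 + C ^ 2) * u := by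
  have hpos : 0 < √(1 + C ^ 2) := Real.sqrt_pos.mpr (by positivity)
  rw [div_mul_eq_mul_div, le_div_iff₀ hpos]
  refine le_of_pow_le_pow_left₀ two_ne_zero (by positivity) ?_
  have hsq : v ^ 2 ≤ (C * w) ^ 2 := pow_le_pow_left₀ hv hvw 2
  rw [mul_pow, Real.sq_sqrt (by positivity)]
  nlinarith

lemma sq_sqrt_tsum_tail_sq {a : ℕ → ℝ} (ha : Summable fun k => a k ^ 2) (k : ℕ) :
    √(∑' i, a (k + i) ^ 2) ^ 2 = a k ^ 2 + √(∑' i, a (k + 1 + i) ^ 2) ^ 2 := by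
  have htail : ∀ n, Summable fun i => a (n + i) ^ 2 := fun n =>
    ha.comp_injective (add_right_injective n)
  rw [Real.sq_sqrt (tsum_nonneg fun _ => sq_nonneg _),
    Real.sq_sqrt (tsum_nonneg fun _ => sq_nonneg _), (htail k).tsum_eq_zero_add]
  simp only [add_zero, add_right_comm k 1, add_assoc]

lemma div_sqrt_one_add_sq_pow_le_half {C : ℝ} (hC : 0 < C) {q : ℕ} (hq : 4 * C ^ 2 ≤ q) :
    (C / √(1 + C ^ 2)) ^ q ≤ 1 / 2 := by
  have hC2 : 0 < C ^ 2 := by positivity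
  have hratio : (C / √(1 + C ^ 2)) ^ 2 = (1 + 1 / C ^ 2)⁻¹ := by
    rw [div_pow, Real.sq_sqrt (by positivity)]
    field_simp
    ring
  have hbernoulli : 1 + q * (1 / C ^ 2) ≤ (1 + 1 / C ^ 2) ^ q :=
    one_add_mul_le_pow (by linarith [one_div_pos.mpr hC2]) q
  have hfour : (4 : ℝ) ≤ q * (1 / C ^ 2) := by
    rw [mul_one_div, le_div_iff₀ hC2]; linarith
  refine le_of_pow_le_pow_left₀ two_ne_zero (by norm_num) ?_
  rw [← pow_mul, mul_comm, pow_mul, hratio, inv_pow, inv_le_comm₀ (by positivity) (by norm_num)]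
  calc ((1 / 2 : ℝ) ^ 2)⁻¹ = 4 := by norm_num
    _ ≤ (1 + 1 / C ^ 2) ^ q := by linarith

lemma le_rpow_neg_one_div_of_pow_le_inv {θ x : ℝ} {q : ℕ} (hθ : 0 ≤ θ) (hx : 0 < x)
    (hq : q ≠ 0) (h : θ ^ q ≤ x⁻¹) : θ ≤ x ^ (-(1 / (q : ℝ))) := by
  calc θ = (θ ^ q) ^ (q⁻¹ : ℝ) := (Real.pow_rpow_inv_natCast hθ hq).symm
    _ ≤ x⁻¹ ^ (q⁻¹ : ℝ) := Real.rpow_le_rpow (by positivity) h (by positivity)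
    _ = x ^ (-(1 / (q : ℝ))) := by rw [Real.inv_rpow hx.le, Real.rpow_neg hx.le, one_div]

theorem tail_decay_of_sequence_general
    (c C_init C_prop : ℝ) (hc : 0 ≤ c) (hCp : 0 < C_prop)
    (Shat S ρ : ℝ) (q : ℕ)
    (hShat : Shat = max C_init C_prop)
    (hS : S = 2 * Shat)
    (hq : q = (Nat.ceil S) ^ 2)
    (hρ : ρ = (2:ℝ) ^ (-(1 / (q:ℝ))))
    (a : ℕ → ℝ)
    (ha_sum : Summable fun k => a k ^ 2)
    (b : ℕ → ℝ)
    (hb : ∀ k, b k = Real.sqrt (∑' k' : ℕ, a (k + k') ^ 2))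
    (hb0 : b 0 ≤ C_init * c)
    (hbsucc : ∀ k, b (k + 1) ≤ C_prop * a k) :
    ∀ p : ℕ, b p ≤ S * ρ ^ p * c := by
  intro p
  set θ := C_prop / √(1 + C_prop ^ 2)
  have hθ : 0 ≤ θ := by positivity
  have hb_nonneg : ∀ k, 0 ≤ b k := fun k => hb k ▸ Real.sqrt_nonneg _
  have hstep : ∀ k, b (k + 1) ≤ θ * b k := fun k =>
    le_div_sqrt_one_add_sq_mul hCp.le (hb_nonneg k) (hb_nonneg (k + 1))
      (by rw [hb k, hb (k + 1)]; exact sq_sqrt_tsum_tail_sq ha_sum k) (hbsucc k)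
  have hSpos : 0 < S := by rw [hS, hShat]; linarith [le_max_right C_init C_prop]
  have hq4 : 4 * C_prop ^ 2 ≤ q := by
    have hSq : S ^ 2 ≤ (q : ℝ) := by
      rw [hq, Nat.cast_pow]; exact pow_le_pow_left₀ hSpos.le (Nat.le_ceil S) 2
    have hCS : 2 * C_prop ≤ S := by rw [hS, hShat]; linarith [le_max_right C_init C_prop]
    nlinarith
  have hq0 : q ≠ 0 := by rw [hq]; exact pow_ne_zero 2 (Nat.ceil_pos.mpr hSpos).ne'
  have hθρ : θ ≤ ρ := hρ ▸ le_rpow_neg_one_div_of_pow_le_inv hθ two_pos hq0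
    (one_div (2 : ℝ) ▸ div_sqrt_one_add_sq_pow_le_half hCp hq4)
  have hCS : C_init ≤ S := by rw [hS, hShat]; linarith [le_max_left C_init C_prop]
  calc b p ≤ θ ^ p * b 0 := le_geom hθ p fun k _ => hstep k
    _ ≤ ρ ^ p * (S * c) := mul_le_mul (pow_le_pow_left₀ hθ hθρ p)
        (hb0.trans (mul_le_mul_of_nonneg_right hCS hc)) (hb_nonneg 0)
        (pow_nonneg (hθ.trans hθρ) p)
    _ = S * ρ ^ p * c := by ring

/-- **Abstract induction lemma behind Theorem 3.2.**
Given a nonnegative square-summable sequence `(a_k)` with tail-`L²` quantities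
`b_k = (Σ_{k'≥k} a_{k'}²)^{1/2}` satisfying `b_0 ≤ C_init·c` and
`b_{k+1} ≤ C_prop·a_k`, the tails decay geometrically:
`b_p ≤ S·ρ^p·c` with `S = 2·max(C_init, C_prop)`, `q = ⌈S⌉²`, `ρ = 2^{-1/q}`. -/
theorem tail_decay_of_sequence
    (c C_init C_prop : ℝ) (hc : 0 ≤ c) (hCi : 0 < C_init) (hCp : 0 < C_prop)
    (Shat S ρ : ℝ) (q : ℕ)
    (hShat : Shat = max C_init C_prop)
    (hS : S = 2 * Shat)
    (hq : q = (Nat.ceil S) ^ 2)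
    (hρ : ρ = (2:ℝ) ^ (-(1 / (q:ℝ))))
    (a : ℕ → ℝ) (ha_nonneg : ∀ k, 0 ≤ a k)
    (ha_sum : Summable fun k => a k ^ 2)
    (b : ℕ → ℝ)
    (hb : ∀ k, b k = Real.sqrt (∑' k' : ℕ, a (k + k') ^ 2))
    (hb0 : b 0 ≤ C_init * c)
    (hbsucc : ∀ k, b (k + 1) ≤ C_prop * a k) :
    ∀ p : ℕ, b p ≤ S * ρ ^ p * c :=
  tail_decay_of_sequence_general c C_init C_prop hc hCp Shat S ρ q hShat hS hq hρ a ha_sum b hb hb0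
    hbsucc
end

section
/- Let c ≥ 0 and C_init, C_prop > 0, set Ŝ = max(C_init, C_prop) and q = ⌈2·Ŝ⌉². Let (a_k)_{k∈ℕ} be nonnegative reals with Σ_{k∈ℕ} a_k² < ∞, and define b_k = (Σ_{k'≥k} a_{k'}²)^{1/2}. Assume b_0 ≤ C_init·c and b_{k+1} ≤ C_prop·a_k for every k ∈ ℕ. Then for every k ∈ ℕ one has b_{q·k} ≤ Ŝ·2^{−k}·c. -/
/-! `b_m²` is the tail sum `T m = ∑_{k ≥ m} a_k²`, so the hypothesis reads
`T (k+1) ≤ C_prop² a_k²`. Summing it over `k = m, …, m+q-1` and using that `T` is nonincreasing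
gives `q · T (m+q) ≤ C_prop² · ∑_{k=m}^{m+q-1} a_k² ≤ C_prop² · T m`. Since `q ≥ (2 C_prop)²`,
the tail sum drops by a factor `4`, i.e. `b` halves, every `q` steps. -/

open Finset

noncomputable def tailSum (f : ℕ → ℝ) (m : ℕ) : ℝ := ∑' i, f (m + i)

section TailSum

variable {f : ℕ → ℝ}

lemma tailSum_nonneg (hf0 : 0 ≤ f) (m : ℕ) : 0 ≤ tailSum f m :=
  tsum_nonneg fun _ => hf0 _

lemma tailSum_eq_sum_range_add (hf : Summable f) (m n : ℕ) :
    tailSum f m = ∑ j ∈ range n, f (m + j) + tailSum f (m + n) := by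
  have hfm : Summable fun i => f (m + i) := by
    simpa only [add_comm m] using (summable_nat_add_iff m).2 hf
  rw [tailSum, ← hfm.sum_add_tsum_nat_add n, tailSum]
  simp only [add_assoc, add_comm n]

lemma sum_range_le_tailSum (hf : Summable f) (hf0 : 0 ≤ f) (m n : ℕ) :
    ∑ j ∈ range n, f (m + j) ≤ tailSum f m := by
  rw [tailSum_eq_sum_range_add hf m n]
  linarith [tailSum_nonneg hf0 (m + n)]

lemma tailSum_antitone (hf : Summable f) (hf0 : 0 ≤ f) : Antitone (tailSum f) := by
  intro m m' hmm'
  obtain ⟨n, rfl⟩ := Nat.exists_eq_add_of_le hmm'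
  rw [tailSum_eq_sum_range_add hf m n]
  linarith [sum_nonneg fun j (_ : j ∈ range n) => hf0 (m + j)]

lemma natCast_mul_tailSum_add_le (hf : Summable f) (hf0 : 0 ≤ f) {K : ℝ} (hK : 0 ≤ K)
    (h : ∀ k, tailSum f (k + 1) ≤ K * f k) (m n : ℕ) :
    n * tailSum f (m + n) ≤ K * tailSum f m :=
  calc n * tailSum f (m + n) = ∑ _j ∈ range n, tailSum f (m + n) := by
        rw [sum_const, card_range, nsmul_eq_mul]
    _ ≤ ∑ j ∈ range n, tailSum f (m + j + 1) :=
        sum_le_sum fun j hj => tailSum_antitone hf hf0 (by simp at hj; omega)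
    _ ≤ ∑ j ∈ range n, K * f (m + j) := sum_le_sum fun j _ => h (m + j)
    _ ≤ K * tailSum f m := by
        rw [← mul_sum]
        exact mul_le_mul_of_nonneg_left (sum_range_le_tailSum hf hf0 m n) hK

lemma tailSum_mul_le_pow (hf : Summable f) (hf0 : 0 ≤ f) {K : ℝ} (hK : 0 ≤ K)
    (h : ∀ k, tailSum f (k + 1) ≤ K * f k) {n : ℕ} (hn : 0 < n) (k : ℕ) :
    tailSum f (n * k) ≤ (K / n) ^ k * tailSum f 0 := by
  induction k with
  | zero => simp
  | succ k ih =>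
    have hn' : (0 : ℝ) < n := Nat.cast_pos.2 hn
    have hstep : tailSum f (n * k + n) ≤ K / n * tailSum f (n * k) := by
      rw [div_mul_eq_mul_div, le_div_iff₀ hn', mul_comm]
      exact natCast_mul_tailSum_add_le hf hf0 hK h (n * k) n
    calc tailSum f (n * (k + 1)) = tailSum f (n * k + n) := by rw [mul_add_one]
      _ ≤ K / n * ((K / n) ^ k * tailSum f 0) :=
        hstep.trans (mul_le_mul_of_nonneg_left ih (by positivity))
      _ = (K / n) ^ (k + 1) * tailSum f 0 := by ring

end TailSum

theorem tail_halving_of_sequence_general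
    (c C_init C_prop : ℝ) (hc : 0 ≤ c) (hCp : 0 < C_prop)
    (Shat : ℝ) (q : ℕ)
    (hShat : Shat = max C_init C_prop)
    (hq : q = (Nat.ceil (2 * Shat)) ^ 2)
    (a : ℕ → ℝ)
    (ha_sum : Summable fun k => a k ^ 2)
    (b : ℕ → ℝ)
    (hb : ∀ k, b k = Real.sqrt (∑' k' : ℕ, a (k + k') ^ 2))
    (hb0 : b 0 ≤ C_init * c)
    (hbsucc : ∀ k, b (k + 1) ≤ C_prop * a k) :
    ∀ k : ℕ, b (q * k) ≤ Shat * (1 / 2) ^ k * c := by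
  intro k
  set T := tailSum fun k => a k ^ 2
  have hT0 : 0 ≤ fun k => a k ^ 2 := fun k => sq_nonneg (a k)
  have hbT : ∀ k, b k = Real.sqrt (T k) := hb
  have hTsucc : ∀ k, T (k + 1) ≤ C_prop ^ 2 * a k ^ 2 := fun k => by
    have := hbsucc k
    rw [hbT, Real.sqrt_le_iff] at this
    linarith [mul_pow C_prop (a k) 2]
  have h2Cp : 2 * C_prop ≤ Nat.ceil (2 * Shat) := by
    have : C_prop ≤ Shat := hShat ▸ le_max_right _ _
    linarith [Nat.le_ceil (2 * Shat)]
  have hq4 : 4 * C_prop ^ 2 ≤ q := by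
    rw [hq, Nat.cast_pow]; nlinarith
  have hqpos : 0 < q := by
    have : (0 : ℝ) < q := by nlinarith
    exact_mod_cast this
  have hdecay : T (q * k) ≤ ((1 / 2) ^ k) ^ 2 * T 0 := by
    refine (tailSum_mul_le_pow ha_sum hT0 (sq_nonneg C_prop) hTsucc hqpos k).trans ?_
    rw [← pow_mul, mul_comm k, pow_mul]
    gcongr
    · exact tailSum_nonneg hT0 0
    · rw [div_le_iff₀ (by exact_mod_cast hqpos)]; linarith
  calc b (q * k) ≤ (1 / 2) ^ k * b 0 := by
        rw [hbT, hbT, ← Real.sqrt_sq (by positivity : (0 : ℝ) ≤ (1 / 2) ^ k),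
          ← Real.sqrt_mul (by positivity)]
        exact Real.sqrt_le_sqrt hdecay
    _ ≤ (1 / 2) ^ k * (Shat * c) := by
        gcongr
        exact hb0.trans (mul_le_mul_of_nonneg_right (hShat ▸ le_max_left _ _) hc)
    _ = Shat * (1 / 2) ^ k * c := by ring

/-- **Induction step estimate (inequality (12) in the proof of Theorem 3.2).**
Under the same assumptions as the abstract induction lemma, with
`Ŝ = max(C_init, C_prop)` and `q = ⌈2Ŝ⌉²`, one has `b_{q·k} ≤ Ŝ·2^{-k}·c`. -/
theorem tail_halving_of_sequence
    (c C_init C_prop : ℝ) (hc : 0 ≤ c) (hCi : 0 < C_init) (hCp : 0 < C_prop)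
    (Shat : ℝ) (q : ℕ)
    (hShat : Shat = max C_init C_prop)
    (hq : q = (Nat.ceil (2 * Shat)) ^ 2)
    (a : ℕ → ℝ) (ha_nonneg : ∀ k, 0 ≤ a k)
    (ha_sum : Summable fun k => a k ^ 2)
    (b : ℕ → ℝ)
    (hb : ∀ k, b k = Real.sqrt (∑' k' : ℕ, a (k + k') ^ 2))
    (hb0 : b 0 ≤ C_init * c)
    (hbsucc : ∀ k, b (k + 1) ≤ C_prop * a k) :
    ∀ k : ℕ, b (q * k) ≤ Shat * (1 / 2) ^ k * c :=
  tail_halving_of_sequence_general c C_init C_prop hc hCp Shat q hShat hq a ha_sum b hb hb0 hbsucc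
end

section
/- Let β > 0, κ ≥ 0 and M > 0. There exist constants C, σ > 0 such that for every initial condition (y0, v0) ∈ ℝ² with (y0² + v0²)^{1/2} ≤ M there exist differentiable functions y, v : [0,∞) → ℝ and a function u : [0,∞) → ℝ with y(0) = y0, v(0) = v0, satisfying for all t ≥ 0 the equations y'(t) = v(t) and v'(t) = −β·v(t) − κ·v(t)·|v(t)| + u(t), together with the bounds (y(t)² + v(t)²)^{1/2} ≤ C·e^{−σt}·(y0² + v0²)^{1/2} and |u(t)| ≤ C·e^{−σt}·(y0² + v0²)^{1/2}. -/
/-!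
The control `u = ẍ + βẋ + κẋ|ẋ|` cancels the drag, so the vehicle can follow any reference
trajectory `x` exactly. Take for `x` the critically damped solution `e^{-t}(y₀ + (y₀ + v₀)t)` of
`ẍ + 2ẋ + x = 0`: its position, velocity and acceleration are all of the form `e^{-t}(c + dt)`
with `|c|, |d| ≤ 3‖(y₀, v₀)‖`, and `t e^{-t/2} ≤ 2` makes each of them decay like `e^{-t/2}`.
In the quadratic drag term `κv|v|` of `u`, one factor `|v| ≲ e^{-t/2}‖(y₀, v₀)‖` is bounded by a
multiple of `M`, which keeps the constant uniform over the ball of radius `M`.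
-/

open Real

noncomputable def critDamped (c d t : ℝ) : ℝ := exp (-t) * (c + d * t)

lemma critDamped_zero (c d : ℝ) : critDamped c d 0 = c := by
  simp [critDamped]

lemma hasDerivAt_critDamped (c d t : ℝ) :
    HasDerivAt (critDamped c d) (critDamped (d - c) (-d) t) t := by
  have h : HasDerivAt (fun s => exp (-s) * (c + d * s)) _ t :=
    ((hasDerivAt_neg t).exp).mul (((hasDerivAt_id' t).const_mul d).const_add c)
  exact h.congr_deriv (by simp only [critDamped]; ring)

lemma mul_exp_neg_half_le_two (t : ℝ) : t * exp (-(1 / 2) * t) ≤ 2 := by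
  have h := add_one_le_exp (t / 2)
  rw [show -(1 / 2) * t = -(t / 2) by ring, exp_neg, ← div_eq_mul_inv,
    div_le_iff₀ (exp_pos _)]
  linarith

lemma abs_critDamped_le {c d a b r t : ℝ} (hc : |c| ≤ a * r) (hd : |d| ≤ b * r)
    (ht : 0 ≤ t) :
    |critDamped c d t| ≤ (a + 2 * b) * (exp (-(1 / 2) * t) * r) := by
  have hsplit : exp (-t) = exp (-(1 / 2) * t) * exp (-(1 / 2) * t) := by
    rw [← exp_add]; ring_nf
  have hE : 0 < exp (-(1 / 2) * t) := exp_pos _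
  have hE1 : exp (-(1 / 2) * t) ≤ 1 := exp_le_one_iff.mpr (by linarith)
  have hc0 : 0 ≤ a * r := (abs_nonneg c).trans hc
  have hd0 : 0 ≤ b * r := (abs_nonneg d).trans hd
  have hlin : |c + d * t| ≤ a * r + b * r * t := by
    calc |c + d * t| ≤ |c| + |d| * t := by
          simpa [abs_mul, abs_of_nonneg ht] using abs_add_le c (d * t)
      _ ≤ a * r + b * r * t := by gcongr
  calc |critDamped c d t| = exp (-t) * |c + d * t| := by
        rw [critDamped, abs_mul, abs_of_pos (exp_pos _)]
    _ ≤ exp (-(1 / 2) * t) * exp (-(1 / 2) * t) * (a * r + b * r * t) := by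
        rw [hsplit]; gcongr
    _ ≤ (a + 2 * b) * (exp (-(1 / 2) * t) * r) := by
        nlinarith [mul_le_mul_of_nonneg_left hE1 (mul_nonneg hc0 hE.le),
          mul_le_mul_of_nonneg_left (mul_exp_neg_half_le_two t) (mul_nonneg hd0 hE.le)]

lemma sqrt_sq_add_sq_le_abs_add_abs (a b : ℝ) : √(a ^ 2 + b ^ 2) ≤ |a| + |b| := by
  rw [sqrt_le_left (by positivity)]
  nlinarith [sq_abs a, sq_abs b, abs_nonneg a, abs_nonneg b]

lemma abs_drag_compensation_le {w v a b ρ m β κ : ℝ} (hw : |w| ≤ a * ρ) (hv : |v| ≤ b * ρ)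
    (hρ : 0 ≤ ρ) (hρm : ρ ≤ m) :
    |(w + β * v + κ * v * |v|)| ≤ (a + |β| * b + |κ| * b ^ 2 * m) * ρ := by
  have hsq : |v| * |v| ≤ b ^ 2 * m * ρ := by
    calc |v| * |v| ≤ (b * ρ) * (b * ρ) :=
          mul_le_mul hv hv (abs_nonneg v) ((abs_nonneg v).trans hv)
      _ = b ^ 2 * ρ * ρ := by ring
      _ ≤ b ^ 2 * ρ * m := by gcongr
      _ = b ^ 2 * m * ρ := by ring
  calc |(w + β * v + κ * v * |v|)| ≤ |w| + |β * v| + |(κ * v * |v|)| := abs_add_three _ _ _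
    _ = |w| + |β| * |v| + |κ| * (|v| * |v|) := by simp only [abs_mul, abs_abs]; ring
    _ ≤ a * ρ + |β| * (b * ρ) + |κ| * (b ^ 2 * m * ρ) := by gcongr
    _ = (a + |β| * b + |κ| * b ^ 2 * m) * ρ := by ring

theorem vehicle_asymptotic_controllability_general
    (β κ M : ℝ) :
    ∃ C σ : ℝ, 0 < C ∧ 0 < σ ∧
      ∀ y0 v0 : ℝ, Real.sqrt (y0 ^ 2 + v0 ^ 2) ≤ M →
        ∃ y v u : ℝ → ℝ,
          y 0 = y0 ∧ v 0 = v0 ∧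
          (∀ t ≥ (0:ℝ), HasDerivAt y (v t) t) ∧
          (∀ t ≥ (0:ℝ),
            HasDerivAt v (-β * v t - κ * v t * |v t| + u t) t) ∧
          (∀ t ≥ (0:ℝ),
            Real.sqrt (y t ^ 2 + v t ^ 2) ≤
              C * Real.exp (-σ * t) * Real.sqrt (y0 ^ 2 + v0 ^ 2)) ∧
          (∀ t ≥ (0:ℝ),
            |u t| ≤ C * Real.exp (-σ * t) * Real.sqrt (y0 ^ 2 + v0 ^ 2)) := by
  have hC : 10 ≤ 10 + 5 * |β| + 25 * |κ| * |M| := by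
    linarith [show 0 ≤ 5 * |β| + 25 * |κ| * |M| by positivity]
  refine ⟨10 + 5 * |β| + 25 * |κ| * |M|, 1 / 2, by linarith, by norm_num, fun y0 v0 hrM => ?_⟩
  set r := √(y0 ^ 2 + v0 ^ 2)
  have hEr (t : ℝ) : 0 ≤ exp (-(1 / 2) * t) * r := by positivity
  have hy0 : |y0| ≤ 1 * r := by rw [one_mul]; exact abs_le_sqrt (by nlinarith)
  have hv0 : |v0| ≤ 1 * r := by rw [one_mul]; exact abs_le_sqrt (by nlinarith)
  have hb : |y0 + v0| ≤ 2 * r := (abs_add_le _ _).trans (by linarith)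
  have hb' : |-(y0 + v0)| ≤ 2 * r := (abs_neg _).trans_le hb
  have hw0 : |-(y0 + v0) - v0| ≤ 3 * r := (abs_sub _ _).trans (by linarith)
  refine ⟨critDamped y0 (y0 + v0), critDamped v0 (-(y0 + v0)),
    fun t => critDamped (-(y0 + v0) - v0) (y0 + v0) t + β * critDamped v0 (-(y0 + v0)) t
      + κ * critDamped v0 (-(y0 + v0)) t * |critDamped v0 (-(y0 + v0)) t|,
    critDamped_zero _ _, critDamped_zero _ _, fun t _ => ?_, fun t _ => ?_, fun t ht => ?_,
    fun t ht => ?_⟩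
  · convert hasDerivAt_critDamped y0 (y0 + v0) t using 2; ring
  · convert hasDerivAt_critDamped v0 (-(y0 + v0)) t using 1
    rw [neg_neg]; ring
  · calc _ ≤ _ := sqrt_sq_add_sq_le_abs_add_abs _ _
      _ ≤ _ := add_le_add (abs_critDamped_le hy0 hb ht) (abs_critDamped_le hv0 hb' ht)
      _ ≤ _ := by linarith [mul_le_mul_of_nonneg_right hC (hEr t), hEr t]
  · have hrE : exp (-(1 / 2) * t) * r ≤ |M| :=
      (mul_le_of_le_one_left (sqrt_nonneg _) (exp_le_one_iff.mpr (by linarith))).trans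
        (hrM.trans (le_abs_self M))
    calc _ ≤ _ := abs_drag_compensation_le (abs_critDamped_le hw0 hb ht)
          (abs_critDamped_le hv0 hb' ht) (hEr t) hrE
      _ ≤ _ := by linarith [mul_le_mul_of_nonneg_right hC (hEr t), hEr t]

/-- **Asymptotic controllability of a single vehicle (verification of
Assumption 3.1 in the numerical example).**
For the double integrator with viscous and quadratic drag
`ẏ = v`, `v̇ = -βv - κ·v·|v| + u` with `β > 0`, `κ ≥ 0`, there are uniform
constants `C, σ > 0` such that from every initial condition of norm at most `M`
there is a control `u` and a trajectory `(y, v)` decaying exponentially, with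
the control decaying exponentially as well. -/
theorem vehicle_asymptotic_controllability
    (β κ M : ℝ) (hβ : 0 < β) (hκ : 0 ≤ κ) (hM : 0 < M) :
    ∃ C σ : ℝ, 0 < C ∧ 0 < σ ∧
      ∀ y0 v0 : ℝ, Real.sqrt (y0 ^ 2 + v0 ^ 2) ≤ M →
        ∃ y v u : ℝ → ℝ,
          y 0 = y0 ∧ v 0 = v0 ∧
          (∀ t ≥ (0:ℝ), HasDerivAt y (v t) t) ∧
          (∀ t ≥ (0:ℝ),
            HasDerivAt v (-β * v t - κ * v t * |v t| + u t) t) ∧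
          (∀ t ≥ (0:ℝ),
            Real.sqrt (y t ^ 2 + v t ^ 2) ≤
              C * Real.exp (-σ * t) * Real.sqrt (y0 ^ 2 + v0 ^ 2)) ∧
          (∀ t ≥ (0:ℝ),
            |u t| ≤ C * Real.exp (-σ * t) * Real.sqrt (y0 ^ 2 + v0 ^ 2)) :=
  vehicle_asymptotic_controllability_general β κ M
end
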